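/- Let C be a maximal trail cover of a connected graph G. Then every vertex that has odd degree in the covered subgraph G(C) also has odd degree in G, and indeed has the same degree in G(C) as in G. -/

import Mathlib

/-- A trail in a simple graph: a walk with no repeated edges, together with its endpoints. -/
structure GraphTrail {V : Type*} (G : SimpleGraph V) where
  first : V
  last : V
  walk : G.Walk first last
  isTrail : walk.IsTrail

namespace GraphTrail

variable {V : Type*} {G : SimpleGraph V}

/-- The list of edges traversed by the trail. -/
def edges (T : GraphTrail G) : List (Sym2 V) := T.walk.edges

/-- The list of vertices visited by the trail (with multiplicity). -/
def support (T : GraphTrail G) : List V := T.walk.support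

end GraphTrail

/-- A collection of trails is edge-disjoint if no two distinct trails share an edge. -/
def TrailsEdgeDisjoint {V : Type*} {G : SimpleGraph V} (C : Finset (GraphTrail G)) : Prop :=
  (C : Set (GraphTrail G)).Pairwise fun T₁ T₂ => ∀ e, e ∈ T₁.edges → e ∉ T₂.edges

/-- A trail cover of `G`: a set of pairwise edge-disjoint trails visiting every vertex. -/
def IsTrailCover {V : Type*} (G : SimpleGraph V) (C : Finset (GraphTrail G)) : Prop :=
  TrailsEdgeDisjoint C ∧ ∀ v : V, ∃ T ∈ C, v ∈ T.support

/-- A trail decomposition of `G`: a set of pairwise edge-disjoint trails covering every edge. -/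
def IsTrailDecomposition {V : Type*} (G : SimpleGraph V) (C : Finset (GraphTrail G)) : Prop :=
  TrailsEdgeDisjoint C ∧ ∀ e ∈ G.edgeSet, ∃ T ∈ C, e ∈ T.edges

/-- The set of edges of `G` traversed by some trail of `C`. -/
def coveredEdges {V : Type*} {G : SimpleGraph V} (C : Finset (GraphTrail G)) : Set (Sym2 V) :=
  {e | ∃ T ∈ C, e ∈ T.edges}

/-- The subgraph `G(C)` of `G` covered by the trails of `C` (as a simple graph on `V`). -/
def coveredGraph {V : Type*} {G : SimpleGraph V} (C : Finset (GraphTrail G)) : SimpleGraph V :=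
  SimpleGraph.fromEdgeSet (coveredEdges C)

/-- A trail cover `C` of `G` is maximal if `C` is a minimum trail decomposition of the covered
subgraph `G(C)`, and every trail cover covering strictly more edges has strictly more trails. -/
def IsMaximalTrailCover {V : Type*} (G : SimpleGraph V) (C : Finset (GraphTrail G)) : Prop :=
  IsTrailCover G C ∧
  (∀ D : Finset (GraphTrail (coveredGraph C)),
      IsTrailDecomposition (coveredGraph C) D → C.card ≤ D.card) ∧
  (∀ C' : Finset (GraphTrail G), IsTrailCover G C' →
      coveredEdges C ⊂ coveredEdges C' → C.card < C'.card)

/-- For a maximal trail cover `C` of a connected graph `G`, every vertex of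
odd degree in the covered subgraph `G(C)` also has odd degree in `G`, and indeed has the same
degree in `G(C)` as in `G`. -/
theorem maximal_trail_cover_odd_degrees {V : Type*} [Fintype V] (G : SimpleGraph V)
    (hconn : G.Connected) (C : Finset (GraphTrail G)) (hC : IsMaximalTrailCover G C) :
    ∀ v : V, Odd (((coveredGraph C).neighborSet v).ncard) →
      Odd ((G.neighborSet v).ncard) ∧
        ((coveredGraph C).neighborSet v).ncard = (G.neighborSet v).ncard := by
    classical
  intro v hodd
  obtain ⟨hcover, -, hmax⟩ := hC
  have hsub : coveredEdges C ⊆ G.edgeSet := by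
    rintro e ⟨T, hT, he⟩
    exact T.walk.edges_subset_edgeSet he
  have key : ∀ u : V, G.Adj v u → s(v, u) ∈ coveredEdges C := by
    by_contra hcon
    push_neg at hcon
    obtain ⟨u, hadj, hnot⟩ := hcon
    -- express the degree of v in G(C) as a sum over trails
    have hE : (coveredGraph C).edgeSet = coveredEdges C := by
      rw [coveredGraph, SimpleGraph.edgeSet_fromEdgeSet]
      ext e
      simp only [Set.mem_diff, Set.mem_setOf_eq, and_iff_left_iff_imp]
      exact fun he => G.not_isDiag_of_mem_edgeSet (hsub he)
    set F : GraphTrail G → Finset (Sym2 V) :=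
      fun T => (T.edges.filter (fun e => v ∈ e)).toFinset with hF
    have hFcard : ∀ T : GraphTrail G, (F T).card = T.edges.countP (fun e => v ∈ e) := by
      intro T
      show (T.edges.filter (fun e => v ∈ e)).toFinset.card = _
      have hnd : T.edges.Nodup := T.isTrail.edges_nodup
      rw [List.toFinset_card_of_nodup (hnd.filter _),
        List.countP_eq_length_filter]
    have hdisjF : ∀ T₁ ∈ C, ∀ T₂ ∈ C, T₁ ≠ T₂ → Disjoint (F T₁) (F T₂) := by
      intro T₁ h₁ T₂ h₂ hne
      rw [Finset.disjoint_left]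
      intro e he1 he2
      rw [hF, List.mem_toFinset, List.mem_filter] at he1 he2
      exact hcover.1 h₁ h₂ hne e he1.1 he2.1
    have hinc : (coveredGraph C).incidenceSet v = ↑(C.biUnion F) := by
      ext e
      simp only [SimpleGraph.incidenceSet, Set.mem_setOf_eq, hE, Finset.coe_biUnion,
        Set.mem_iUnion, Finset.mem_coe, List.mem_toFinset, List.mem_filter, hF]
      constructor
      · rintro ⟨⟨T, hT, he⟩, hv⟩
        exact ⟨T, hT, he, by simpa using hv⟩
      · rintro ⟨T, hT, he, hv⟩
        exact ⟨⟨T, hT, he⟩, by simpa using hv⟩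
    have hncard : ((coveredGraph C).neighborSet v).ncard
        = ∑ T ∈ C, T.edges.countP (fun e => v ∈ e) := by
      calc ((coveredGraph C).neighborSet v).ncard
          = ((coveredGraph C).incidenceSet v).ncard := by
            rw [← Nat.card_coe_set_eq, ← Nat.card_coe_set_eq]
            exact (Nat.card_congr ((coveredGraph C).incidenceSetEquivNeighborSet v)).symm
        _ = (C.biUnion F).card := by rw [hinc, Set.ncard_coe_finset]
        _ = ∑ T ∈ C, (F T).card := Finset.card_biUnion hdisjF
        _ = ∑ T ∈ C, T.edges.countP (fun e => v ∈ e) :=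
            Finset.sum_congr rfl fun T _ => hFcard T
    rw [hncard] at hodd
    have hexT : ∃ T ∈ C, Odd (T.edges.countP (fun e => v ∈ e)) := by
      rw [Finset.odd_sum_iff_odd_card_odd] at hodd
      obtain ⟨T, hT⟩ := Finset.card_pos.mp (Nat.pos_of_ne_zero (by
        rintro h0
        rw [h0] at hodd
        simp at hodd))
      rw [Finset.mem_filter] at hT
      exact ⟨T, hT.1, hT.2⟩
    obtain ⟨T, hTC, hTodd⟩ := hexT
    have hne : ¬(T.first ≠ T.last → v ≠ T.first ∧ v ≠ T.last) := by
      rw [← T.isTrail.even_countP_edges_iff v]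
      exact Nat.not_even_iff_odd.mpr hTodd
    push_neg at hne
    obtain ⟨hfl, hv⟩ := hne
    -- get a trail walk from some vertex a to v with the same edges and support as T
    obtain ⟨a, W, hWt, hWe, hWs⟩ :
        ∃ (a : V) (W : G.Walk a v), W.IsTrail ∧ (∀ f, f ∈ W.edges ↔ f ∈ T.edges)
          ∧ (∀ w, w ∈ W.support ↔ w ∈ T.support) := by
      by_cases h : v = T.last
      · exact ⟨T.first, T.walk.copy rfl h.symm, by simp [T.isTrail],
          fun f => by simp [GraphTrail.edges], fun w => by simp [GraphTrail.support]⟩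
      · have h' : v = T.first := by
          by_contra hc
          exact h (hv hc)
        exact ⟨T.last, T.walk.reverse.copy rfl h'.symm, by simp [T.isTrail],
          fun f => by simp [GraphTrail.edges], fun w => by simp [GraphTrail.support]⟩
    have hnewmem : s(v, u) ∉ W.edges := fun hmem => hnot ⟨T, hTC, (hWe _).mp hmem⟩
    have hW't : (W.concat hadj).IsTrail := by
      rw [SimpleGraph.Walk.isTrail_def, SimpleGraph.Walk.edges_concat,
        List.concat_eq_append, List.nodup_append]
      refine ⟨hWt.edges_nodup, List.nodup_singleton _, ?_⟩
      intro x hx hx' hy hxy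
      rw [List.mem_singleton] at hy
      subst hy hxy
      exact hnewmem hx
    set T' : GraphTrail G := ⟨a, u, W.concat hadj, hW't⟩ with hT'
    have hT'edges : ∀ f, f ∈ T'.edges ↔ f ∈ T.edges ∨ f = s(v, u) := by
      intro f
      rw [hT']
      show f ∈ (W.concat hadj).edges ↔ _
      rw [SimpleGraph.Walk.edges_concat, List.concat_eq_append, List.mem_append]
      simp [hWe f]
    have hT'new : T' ∉ C := fun hmem => hnot ⟨T', hmem, (hT'edges _).mpr (Or.inr rfl)⟩
    set C' : Finset (GraphTrail G) := insert T' (C.erase T) with hC'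
    have hcard : C'.card ≤ C.card := by
      calc C'.card ≤ (C.erase T).card + 1 := Finset.card_insert_le _ _
        _ = C.card := Finset.card_erase_add_one hTC
    have hdisjT' : ∀ S, S ∈ C → S ≠ T → ∀ f, f ∈ T'.edges → f ∉ S.edges := by
      intro S hS hST f hf hfS
      rcases (hT'edges f).mp hf with h | rfl
      · exact hcover.1 hTC hS (Ne.symm hST) f h hfS
      · exact hnot ⟨S, hS, hfS⟩
    have hcov' : IsTrailCover G C' := by
      constructor
      · intro T₁ h₁ T₂ h₂ hne12 f hf
        simp only [hC', Finset.coe_insert, Set.mem_insert_iff, Finset.mem_coe,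
          Finset.mem_erase] at h₁ h₂
        rcases h₁ with rfl | ⟨hne1, h1C⟩
        · rcases h₂ with rfl | ⟨hne2, h2C⟩
          · exact absurd rfl hne12
          · exact hdisjT' T₂ h2C hne2 f hf
        · rcases h₂ with rfl | ⟨hne2, h2C⟩
          · intro hf2
            exact hdisjT' T₁ h1C hne1 f hf2 hf
          · exact hcover.1 h1C h2C hne12 f hf
      · intro w
        obtain ⟨S, hS, hw⟩ := hcover.2 w
        by_cases hST : S = T
        · refine ⟨T', by simp [hC'], ?_⟩
          subst hST
          have hwW : w ∈ W.support := (hWs w).mpr hw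
          rw [hT']
          show w ∈ (W.concat hadj).support
          rw [SimpleGraph.Walk.support_concat]
          exact List.mem_append_left _ hwW
        · exact ⟨S, by simp [hC', hST, hS], hw⟩
    have hssub : coveredEdges C ⊂ coveredEdges C' := by
      rw [Set.ssubset_def]
      constructor
      · rintro f ⟨S, hS, hf⟩
        by_cases hST : S = T
        · subst hST
          exact ⟨T', by simp [hC'], (hT'edges f).mpr (Or.inl hf)⟩
        · exact ⟨S, by simp [hC', hST, hS], hf⟩
      · intro hcon2
        exact hnot (hcon2 ⟨T', by simp [hC'], (hT'edges _).mpr (Or.inr rfl)⟩)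
    exact absurd hcard (not_le.mpr (hmax C' hcov' hssub))
  have hset : (coveredGraph C).neighborSet v = G.neighborSet v := by
    ext u
    simp only [SimpleGraph.mem_neighborSet, coveredGraph, SimpleGraph.fromEdgeSet_adj]
    constructor
    · rintro ⟨he, -⟩
      exact G.mem_edgeSet.mp (hsub he)
    · intro h
      exact ⟨key u h, h.ne⟩
  rw [hset] at hodd ⊢
  exact ⟨hodd, rfl⟩
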